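/- Let σ̄ be a consistent permutation sequence, M a tree model and φ a modal CNF formula. Then M ⊨ φ if and only if σ̄(M) ⊨ σ̄(φ). -/

import Mathlib

namespace ModalSym

inductive Lit (Atom : Type) : Type
  | pos (a : Atom) : Lit Atom
  | neg (a : Atom) : Lit Atom
  deriving DecidableEq

namespace Lit
def flip {Atom : Type} : Lit Atom → Lit Atom
  | pos a => neg a
  | neg a => pos a
def atom {Atom : Type} : Lit Atom → Atom
  | pos a => a
  | neg a => a
end Lit

/-- A permutation `σ` of literals is consistent when it commutes with negation. -/
def Consistent {Atom : Type} (σ : Lit Atom → Lit Atom) : Prop :=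
  ∀ l, σ l.flip = (σ l).flip

/-- Modal CNF clauses of modal depth at most `n`: a clause is a finite set whose
elements are literals or modal literals `□ₘ C` / `¬□ₘ C` (`Bool` gives the polarity,
`true` for `□ₘ C`). -/
@[reducible] def ClauseT (Atom Mod : Type) : ℕ → Type
  | 0 => Finset (Lit Atom)
  | n+1 => Finset (Lit Atom ⊕ Bool × Mod × ClauseT Atom Mod n)

instance instDecEqClauseT {Atom Mod : Type} [DecidableEq Atom] [DecidableEq Mod] :
    ∀ n, DecidableEq (ClauseT Atom Mod n)
  | 0 => inferInstanceAs (DecidableEq (Finset (Lit Atom)))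
  | n+1 =>
    letI := instDecEqClauseT (Atom := Atom) (Mod := Mod) n
    inferInstanceAs (DecidableEq (Finset (Lit Atom ⊕ Bool × Mod × ClauseT Atom Mod n)))

/-- A modal CNF formula (of modal depth at most `n`): a finite set of clauses. -/
@[reducible] def FormT (Atom Mod : Type) (n : ℕ) : Type := Finset (ClauseT Atom Mod n)

/-- A pointed Kripke model. -/
structure KModel (Atom Mod : Type) : Type 1 where
  W : Type
  pt : W
  V : W → Set Atom
  R : Mod → W → W → Prop

def satLit {Atom : Type} (S : Set Atom) : Lit Atom → Prop
  | .pos a => a ∈ S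
  | .neg a => a ∉ S

def satClause {Atom Mod : Type} (M : KModel Atom Mod) :
    ∀ n, ClauseT Atom Mod n → M.W → Prop
  | 0, C, v => ∃ l ∈ C, satLit (M.V v) l
  | n+1, C, v => ∃ e ∈ C,
      match e with
      | Sum.inl l => satLit (M.V v) l
      | Sum.inr (b, m, C') =>
          cond b (∀ u, M.R m v u → satClause M n C' u)
                 (¬ ∀ u, M.R m v u → satClause M n C' u)

/-- `M ⊨ φ`. -/
def satForm {Atom Mod : Type} (M : KModel Atom Mod) {n : ℕ} (φ : FormT Atom Mod n) : Prop :=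
  ∀ C ∈ φ, satClause M n C M.pt

/-- `L_S`, the complete consistent set of literals generated by `S ⊆ Atom`. -/
def genLits {Atom : Type} (S : Set Atom) : Set (Lit Atom) := {l | satLit S l}

def permClause {Atom Mod : Type} [DecidableEq Atom] [DecidableEq Mod]
    (σ : Lit Atom → Lit Atom) : ∀ n, ClauseT Atom Mod n → ClauseT Atom Mod n
  | 0, C => C.image σ
  | n+1, C => C.image fun e =>
      match e with
      | Sum.inl l => Sum.inl (σ l)
      | Sum.inr (b, m, C') => Sum.inr (b, m, permClause σ n C')

/-- The action `σ(φ)` of a permutation of literals on a modal CNF formula. -/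
def permForm {Atom Mod : Type} [DecidableEq Atom] [DecidableEq Mod]
    (σ : Lit Atom → Lit Atom) {n : ℕ} (φ : FormT Atom Mod n) : FormT Atom Mod n :=
  φ.image (permClause σ n)

/-- The permuted model `σ(M)`, with `V'(v) = σ(L_{V(v)}) ∩ Atom`. -/
def permModel {Atom Mod : Type} (σ : Lit Atom → Lit Atom) (M : KModel Atom Mod) :
    KModel Atom Mod where
  W := M.W
  pt := M.pt
  V := fun v => {a | Lit.pos a ∈ σ '' genLits (M.V v)}
  R := M.R

def IsBisim {Atom Mod : Type} (M M' : KModel Atom Mod) (Z : M.W → M'.W → Prop) : Prop :=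
  Z M.pt M'.pt ∧
  (∀ v v', Z v v' → ∀ a, a ∈ M.V v ↔ a ∈ M'.V v') ∧
  (∀ v v' m u, Z v v' → M.R m v u → ∃ u', M'.R m v' u' ∧ Z u u') ∧
  (∀ v v' m u', Z v v' → M'.R m v' u' → ∃ u, M.R m v u ∧ Z u u')

def Bisimilar {Atom Mod : Type} (M M' : KModel Atom Mod) : Prop := ∃ Z, IsBisim M M' Z

def IsSigmaSim {Atom Mod : Type} (σ : Lit Atom → Lit Atom) (M M' : KModel Atom Mod)
    (Z : M.W → M'.W → Prop) : Prop :=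
  Z M.pt M'.pt ∧
  (∀ v v', Z v v' → ∀ l, l ∈ genLits (M.V v) ↔ σ l ∈ genLits (M'.V v')) ∧
  (∀ v v' m u, Z v v' → M.R m v u → ∃ u', M'.R m v' u' ∧ Z u u') ∧
  (∀ v v' m u', Z v v' → M'.R m v' u' → ∃ u, M.R m v u ∧ Z u u')

/-- `M ,→σ M'`. -/
def SigmaSim {Atom Mod : Type} (σ : Lit Atom → Lit Atom) (M M' : KModel Atom Mod) : Prop :=
  ∃ Z, IsSigmaSim σ M M' Z

/-- `IsPathFrom M v p`: `p` is a valid path (list of (modality, state) steps) starting at `v`. -/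
def IsPathFrom {Atom Mod : Type} (M : KModel Atom Mod) : M.W → List (Mod × M.W) → Prop
  | _, [] => True
  | v, s :: rest => M.R s.1 v s.2 ∧ IsPathFrom M s.2 rest

def pathLast {Atom Mod : Type} (M : KModel Atom Mod) : M.W → List (Mod × M.W) → M.W
  | v, [] => v
  | _, s :: rest => pathLast M s.2 rest

/-- A tree model: every state is the last state of exactly one rooted path. -/
def IsTree {Atom Mod : Type} (M : KModel Atom Mod) : Prop :=
  ∀ v : M.W, ∃! p : List (Mod × M.W), IsPathFrom M M.pt p ∧ pathLast M M.pt p = v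

/-- The depth of a state: the (minimal) length of a rooted path leading to it. -/
noncomputable def depth {Atom Mod : Type} (M : KModel Atom Mod) (v : M.W) : ℕ :=
  sInf {d | ∃ p, IsPathFrom M M.pt p ∧ pathLast M M.pt p = v ∧ p.length = d}

/-- The unravelling `T(M)`. -/
def unravel {Atom Mod : Type} (M : KModel Atom Mod) : KModel Atom Mod where
  W := {p : List (Mod × M.W) // IsPathFrom M M.pt p}
  pt := ⟨[], trivial⟩
  V := fun p => M.V (pathLast M M.pt p.1)
  R := fun m p p' => ∃ v, p'.1 = p.1 ++ [(m, v)]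

/-- `head(σ̄)`: the first permutation of the sequence, identity for the empty sequence. -/
def headP {Atom : Type} (σs : List (Lit Atom → Lit Atom)) : Lit Atom → Lit Atom :=
  σs.headD id

def lpermClause {Atom Mod : Type} [DecidableEq Atom] [DecidableEq Mod]
    (σs : List (Lit Atom → Lit Atom)) : ∀ n, ClauseT Atom Mod n → ClauseT Atom Mod n
  | 0, C => C.image (headP σs)
  | n+1, C => C.image fun e =>
      match e with
      | Sum.inl l => Sum.inl (headP σs l)
      | Sum.inr (b, m, C') => Sum.inr (b, m, lpermClause σs.tail n C')

/-- The action `σ̄(φ)` of a permutation sequence on a modal CNF formula. -/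
def lpermForm {Atom Mod : Type} [DecidableEq Atom] [DecidableEq Mod]
    (σs : List (Lit Atom → Lit Atom)) {n : ℕ} (φ : FormT Atom Mod n) : FormT Atom Mod n :=
  φ.image (lpermClause σs n)

/-- The layered permuted model `σ̄(M)` (meaningful on tree models):
at a state of depth `d` the permutation `head(σ̄_{d+1})` is used. -/
noncomputable def lpermModel {Atom Mod : Type} (σs : List (Lit Atom → Lit Atom))
    (M : KModel Atom Mod) : KModel Atom Mod where
  W := M.W
  pt := M.pt
  V := fun v => {a | Lit.pos a ∈ headP (σs.drop (depth M v)) '' genLits (M.V v)}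
  R := M.R

def IsLSim {Atom Mod : Type} (σs : List (Lit Atom → Lit Atom)) (M M' : KModel Atom Mod)
    (Z : ℕ → M.W → M'.W → Prop) : Prop :=
  Z 0 M.pt M'.pt ∧
  (∀ i v v', Z i v v' →
    ∀ l, l ∈ genLits (M.V v) ↔ headP (σs.drop i) l ∈ genLits (M'.V v')) ∧
  (∀ i v v' m u, Z i v v' → M.R m v u → ∃ u', M'.R m v' u' ∧ Z (i+1) u u') ∧
  (∀ i v v' m u', Z i v v' → M'.R m v' u' → ∃ u, M.R m v u ∧ Z (i+1) u u')

/-- `M ,→σ̄ M'`. -/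
def LSim {Atom Mod : Type} (σs : List (Lit Atom → Lit Atom)) (M M' : KModel Atom Mod) : Prop :=
  ∃ Z, IsLSim σs M M' Z

/-- `Mod_C(φ)`: the models in the class `𝒞` satisfying `φ`. -/
def ModC {Atom Mod : Type} (𝒞 : Set (KModel Atom Mod)) {n : ℕ} (φ : FormT Atom Mod n) :
    Set (KModel Atom Mod) := {M ∈ 𝒞 | satForm M φ}

/-- `φ ⊨_C ψ`. -/
def Entails {Atom Mod : Type} (𝒞 : Set (KModel Atom Mod)) {n₁ n₂ : ℕ}
    (φ : FormT Atom Mod n₁) (ψ : FormT Atom Mod n₂) : Prop :=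
  ModC 𝒞 φ ⊆ ModC 𝒞 ψ

/-!
The identity relation on `M`, indexed by depth, is a `σ̄`-simulation from a tree model `M` to
`σ̄(M)`: in a tree the successors of a state of depth `d` all have depth `d + 1`, and at depth `d`
the valuation of `σ̄(M)` is exactly the image of `L_{V(v)}` under `head(σ̄_{d+1})`, which an
injective consistent `σ` transports literal by literal. A `σ̄`-simulation relating states at level
`i` transfers the satisfaction of a clause `C` to that of `σ̄_{i+1}(C)`, by induction on the modal
depth of `C`.
-/

section Literals

variable {Atom : Type}

lemma satLit_flip (S : Set Atom) (l : Lit Atom) : satLit S l.flip ↔ ¬ satLit S l := by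
  cases l <;> simp [satLit, Lit.flip]

lemma satLit_image_genLits {σ : Lit Atom → Lit Atom} (hinj : Function.Injective σ)
    (hcons : Consistent σ) (S : Set Atom) (l : Lit Atom) :
    satLit {a | Lit.pos a ∈ σ '' genLits S} (σ l) ↔ satLit S l := by
  have hmem : ∀ l, σ l ∈ σ '' genLits S ↔ satLit S l := fun _ => hinj.mem_set_image
  cases h : σ l with
  | pos b =>
    show Lit.pos b ∈ σ '' genLits S ↔ _
    rw [← h, hmem]
  | neg b =>
    show Lit.pos b ∉ σ '' genLits S ↔ _
    have hflip : Lit.pos b = σ l.flip := by rw [hcons, h]; rfl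
    rw [hflip, hmem, satLit_flip, not_not]

lemma headP_drop_of_forall {P : (Lit Atom → Lit Atom) → Prop} {σs : List (Lit Atom → Lit Atom)}
    (hid : P id) (hσs : ∀ σ ∈ σs, P σ) (i : ℕ) : P (headP (σs.drop i)) := by
  cases h : σs.drop i with
  | nil => exact hid
  | cons σ _ => exact hσs σ (List.mem_of_mem_drop (h ▸ List.mem_cons_self))

end Literals

section Trees

variable {Atom Mod : Type} {M : KModel Atom Mod}

lemma isPathFrom_append (p q : List (Mod × M.W)) (v : M.W) :
    IsPathFrom M v (p ++ q) ↔ IsPathFrom M v p ∧ IsPathFrom M (pathLast M v p) q := by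
  induction p generalizing v with
  | nil => simp [IsPathFrom, pathLast]
  | cons s p ih => simp [IsPathFrom, pathLast, ih, and_assoc]

lemma pathLast_append (p q : List (Mod × M.W)) (v : M.W) :
    pathLast M v (p ++ q) = pathLast M (pathLast M v p) q := by
  induction p generalizing v with
  | nil => rfl
  | cons s p ih => exact ih s.2

lemma depth_pt : depth M M.pt = 0 :=
  Nat.sInf_eq_zero.2 (Or.inl ⟨[], trivial, rfl, rfl⟩)

lemma IsTree.depth_eq_length (htree : IsTree M) {v : M.W} {p : List (Mod × M.W)}
    (hp : IsPathFrom M M.pt p) (hv : pathLast M M.pt p = v) : depth M v = p.length := by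
  have hmem : depth M v ∈
      {d | ∃ q, IsPathFrom M M.pt q ∧ pathLast M M.pt q = v ∧ q.length = d} :=
    Nat.sInf_mem ⟨p.length, p, hp, hv, rfl⟩
  obtain ⟨q, hq, hqv, hlen⟩ := hmem
  rw [← hlen, (htree v).unique ⟨hq, hqv⟩ ⟨hp, hv⟩]

lemma IsTree.depth_eq_of_rel (htree : IsTree M) {m : Mod} {v u : M.W} (hvu : M.R m v u) :
    depth M u = depth M v + 1 := by
  obtain ⟨p, ⟨hp, hv⟩, -⟩ := htree v
  have hpu : IsPathFrom M M.pt (p ++ [(m, u)]) :=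
    (isPathFrom_append _ _ _).2 ⟨hp, hv ▸ ⟨hvu, trivial⟩⟩
  have hu : pathLast M M.pt (p ++ [(m, u)]) = u := by rw [pathLast_append, hv]; rfl
  rw [htree.depth_eq_length hpu hu, htree.depth_eq_length hp hv, List.length_append,
    List.length_singleton]

end Trees

section Simulations

variable {Atom Mod : Type} {σs : List (Lit Atom → Lit Atom)} {M M' : KModel Atom Mod}
  {Z : ℕ → M.W → M'.W → Prop}

lemma IsLSim.forall_rel_iff (hZ : IsLSim σs M M' Z) {i : ℕ} {v : M.W} {v' : M'.W}
    (hv : Z i v v') {P : M.W → Prop} {Q : M'.W → Prop}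
    (hPQ : ∀ {u u'}, Z (i + 1) u u' → (P u ↔ Q u')) (m : Mod) :
    (∀ u, M.R m v u → P u) ↔ ∀ u', M'.R m v' u' → Q u' := by
  constructor
  · intro h u' hu'
    obtain ⟨u, hu, huu'⟩ := hZ.2.2.2 i v v' m u' hv hu'
    exact (hPQ huu').1 (h u hu)
  · intro h u hu
    obtain ⟨u', hu', huu'⟩ := hZ.2.2.1 i v v' m u hv hu
    exact (hPQ huu').2 (h u' hu')

variable [DecidableEq Atom] [DecidableEq Mod]

lemma IsLSim.satClause_iff (hZ : IsLSim σs M M' Z) (n : ℕ) (C : ClauseT Atom Mod n) {i : ℕ}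
    {v : M.W} {v' : M'.W} (hv : Z i v v') :
    satClause M n C v ↔ satClause M' n (lpermClause (σs.drop i) n C) v' := by
  induction n generalizing i v v' with
  | zero =>
    simp only [satClause, lpermClause, Finset.exists_mem_image]
    exact exists_congr fun l => and_congr_right fun _ => hZ.2.1 i v v' hv l
  | succ n ih =>
    simp only [satClause, lpermClause, Finset.exists_mem_image]
    refine exists_congr fun e => and_congr_right fun _ => ?_
    rcases e with l | ⟨b, m, C'⟩
    · exact hZ.2.1 i v v' hv l
    · have hbox := hZ.forall_rel_iff hv (fun huu' => List.tail_drop ▸ ih C' huu') m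
      cases b
      · exact not_congr hbox
      · exact hbox

lemma IsLSim.satForm_iff (hZ : IsLSim σs M M' Z) {n : ℕ} (φ : FormT Atom Mod n) :
    satForm M φ ↔ satForm M' (lpermForm σs φ) := by
  simp only [satForm, lpermForm, Finset.forall_mem_image]
  exact forall₂_congr fun C _ => hZ.satClause_iff n C hZ.1

end Simulations

lemma IsTree.isLSim_lpermModel {Atom Mod : Type} {σs : List (Lit Atom → Lit Atom)}
    (hbij : ∀ σ ∈ σs, Function.Bijective σ) (hcons : ∀ σ ∈ σs, Consistent σ)
    {M : KModel Atom Mod} (htree : IsTree M) :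
    IsLSim σs M (lpermModel σs M) fun i v v' => v = v' ∧ depth M v = i := by
  refine ⟨⟨rfl, depth_pt⟩, ?_, ?_, ?_⟩
  · rintro _ v _ ⟨rfl, rfl⟩ l
    obtain ⟨hinj, hσ⟩ := headP_drop_of_forall (P := fun σ => Function.Injective σ ∧ Consistent σ)
      ⟨Function.injective_id, fun _ => rfl⟩ (fun σ hσ => ⟨(hbij σ hσ).1, hcons σ hσ⟩)
      (depth M v)
    exact (satLit_image_genLits hinj hσ _ l).symm
  all_goals
    rintro _ v _ m u ⟨rfl, rfl⟩ hvu
    exact ⟨u, hvu, rfl, htree.depth_eq_of_rel hvu⟩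

theorem sat_iff_lpermModel_lpermForm_general {Atom Mod : Type}
    [DecidableEq Atom] [DecidableEq Mod]
    (σs : List (Lit Atom → Lit Atom))
    (hbij : ∀ σ ∈ σs, Function.Bijective σ) (hcons : ∀ σ ∈ σs, Consistent σ)
    (M : KModel Atom Mod) (htree : IsTree M)
    {n : ℕ} (φ : FormT Atom Mod n) :
    satForm M φ ↔ satForm (lpermModel σs M) (lpermForm σs φ) :=
  (htree.isLSim_lpermModel hbij hcons).satForm_iff φ

/-- for a tree model `M`, `M ⊨ φ` iff `σ̄(M) ⊨ σ̄(φ)`. -/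
theorem sat_iff_lpermModel_lpermForm {Atom Mod : Type} [Countable Atom] [Countable Mod]
    [DecidableEq Atom] [DecidableEq Mod]
    (σs : List (Lit Atom → Lit Atom))
    (hbij : ∀ σ ∈ σs, Function.Bijective σ) (hcons : ∀ σ ∈ σs, Consistent σ)
    (M : KModel Atom Mod) (htree : IsTree M)
    {n : ℕ} (φ : FormT Atom Mod n) :
    satForm M φ ↔ satForm (lpermModel σs M) (lpermForm σs φ) :=
  sat_iff_lpermModel_lpermForm_general σs hbij hcons M htree φ

end ModalSym
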